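/- (Soundness and completeness of K4m) For every set Γ of modal formulas and every modal formula α: Γ ⊢_K4m α if and only if Γ ⊨_{M_K4m} α, where M_K4m is the eight-valued Nmatrix obtained from M_Km by replacing the multioperator for □. -/
import Mathlib


/- ## Syntax of the modal language -/

inductive Form : Type
  | var : Nat → Form
  | neg : Form → Form
  | imp : Form → Form → Form
  | box : Form → Form
  deriving DecidableEq

namespace Form
/-- ◇α := ¬□¬α -/
def dia (α : Form) : Form := neg (box (neg α))
/-- α∨β := ¬α→β -/
def disj (α β : Form) : Form := imp (neg α) β
/-- α∧β := ¬(α→¬β) -/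
def conj (α β : Form) : Form := neg (imp α (neg β))
end Form

open Form

/-- Substitution instances of classical tautologies over {¬,→}: formulas true under
every Boolean assignment that respects negation and implication. -/
def Taut (φ : Form) : Prop :=
  ∀ v : Form → Bool,
    (∀ α, v (Form.neg α) = !(v α)) →
    (∀ α β, v (Form.imp α β) = (!(v α) || v β)) →
    v φ = true

/-- Hilbert-style derivations from a set of premises, with Modus Ponens as the only
inference rule, given a set `Ax` of axioms. -/
inductive Deriv (Ax : Form → Prop) (Γ : Set Form) : Form → Prop
  | prem {φ : Form} : φ ∈ Γ → Deriv Ax Γ φ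
  | ax {φ : Form} : Ax φ → Deriv Ax Γ φ
  | mp {φ ψ : Form} : Deriv Ax Γ (Form.imp φ ψ) → Deriv Ax Γ φ → Deriv Ax Γ ψ

/- ## Axiom schemas -/

def axK (α β : Form) : Form := (box (α.imp β)).imp ((box α).imp (box β))
def axK1 (α β : Form) : Form := (box (α.imp β)).imp ((dia α).imp (dia β))
def axK2 (α β : Form) : Form := (dia (α.imp β)).imp ((box α).imp (dia β))
def axM1 (α β : Form) : Form := (Form.neg (dia α)).imp (box (α.imp β))
def axM2 (α β : Form) : Form := (box β).imp (box (α.imp β))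
def axM3 (α β : Form) : Form := (dia β).imp (dia (α.imp β))
def axM4 (α β : Form) : Form := (dia (Form.neg α)).imp (dia (α.imp β))
def axT (α : Form) : Form := (box α).imp α
def axD (α : Form) : Form := (box α).imp (dia α)
def axDN1 (α : Form) : Form := (box α).imp (box (Form.neg (Form.neg α)))
def axDN2 (α : Form) : Form := (box (Form.neg (Form.neg α))).imp (box α)
def ax4 (α : Form) : Form := (box α).imp (box (box α))
def ax5 (α : Form) : Form := (dia (box α)).imp (box α)
def axKdet (α β : Form) : Form := (box (α.imp β)).imp ((dia α).imp (box β))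

def axK' (α β : Form) : Form := (dia α).imp (axK α β)
def axK1' (α β : Form) : Form := (dia (Form.neg β)).imp (axK1 α β)
def axK2' (α β : Form) : Form := (dia α).imp (axK2 α β)
def axM3' (α β : Form) : Form := ((dia α).disj (dia (Form.neg α))).imp (axM3 α β)
def axM4' (α β : Form) : Form := (dia (Form.neg β)).imp (axM4 α β)
def axI1 (α β : Form) : Form :=
  ((box α).conj (box (Form.neg α))).imp ((box (α.imp β)).conj (box (Form.neg (α.imp β))))
def axI2 (α β : Form) : Form :=
  ((box β).conj (box (Form.neg β))).imp ((box (α.imp β)).conj (box (Form.neg (α.imp β))))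

/-- The recovery operator ∘α := □α→◇α. -/
def circm (α : Form) : Form := (box α).imp (dia α)
/-- •α := ¬∘α. -/
def bulm (α : Form) : Form := Form.neg (circm α)
/-- The recovery operator ∘'α := (□α→α)∧(□¬α→¬α). -/
def circm' (α : Form) : Form :=
  ((box α).imp α).conj ((box (Form.neg α)).imp (Form.neg α))

/- ## Hilbert calculi -/

/-- The system Km. -/
inductive KmAx : Form → Prop
  | pc {φ : Form} : Taut φ → KmAx φ
  | k' (α β : Form) : KmAx (axK' α β)
  | k1' (α β : Form) : KmAx (axK1' α β)
  | k2' (α β : Form) : KmAx (axK2' α β)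
  | m1 (α β : Form) : KmAx (axM1 α β)
  | m2 (α β : Form) : KmAx (axM2 α β)
  | m3' (α β : Form) : KmAx (axM3' α β)
  | m4' (α β : Form) : KmAx (axM4' α β)
  | i1 (α β : Form) : KmAx (axI1 α β)
  | i2 (α β : Form) : KmAx (axI2 α β)
  | dn1 (α : Form) : KmAx (axDN1 α)
  | dn2 (α : Form) : KmAx (axDN2 α)

/-- The system K4m = Km + (4). -/
inductive K4mAx : Form → Prop
  | km {φ : Form} : KmAx φ → K4mAx φ
  | four (α : Form) : K4mAx (ax4 α)

/-- The system K45m = Km + (4) + (5). -/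
inductive K45mAx : Form → Prop
  | km {φ : Form} : KmAx φ → K45mAx φ
  | four (α : Form) : K45mAx (ax4 α)
  | five (α : Form) : K45mAx (ax5 α)

/-- The system Dm. -/
inductive DmAx : Form → Prop
  | pc {φ : Form} : Taut φ → DmAx φ
  | k (α β : Form) : DmAx (axK α β)
  | k1 (α β : Form) : DmAx (axK1 α β)
  | k2 (α β : Form) : DmAx (axK2 α β)
  | m1 (α β : Form) : DmAx (axM1 α β)
  | m2 (α β : Form) : DmAx (axM2 α β)
  | m3 (α β : Form) : DmAx (axM3 α β)
  | m4 (α β : Form) : DmAx (axM4 α β)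
  | d (α : Form) : DmAx (axD α)
  | dn1 (α : Form) : DmAx (axDN1 α)
  | dn2 (α : Form) : DmAx (axDN2 α)

/-- The system Tm. -/
inductive TmAx : Form → Prop
  | pc {φ : Form} : Taut φ → TmAx φ
  | k (α β : Form) : TmAx (axK α β)
  | k1 (α β : Form) : TmAx (axK1 α β)
  | k2 (α β : Form) : TmAx (axK2 α β)
  | m1 (α β : Form) : TmAx (axM1 α β)
  | m2 (α β : Form) : TmAx (axM2 α β)
  | m3 (α β : Form) : TmAx (axM3 α β)
  | m4 (α β : Form) : TmAx (axM4 α β)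
  | t (α : Form) : TmAx (axT α)
  | dn1 (α : Form) : TmAx (axDN1 α)
  | dn2 (α : Form) : TmAx (axDN2 α)

/-- The system T45m = Tm + (4) + (5). -/
inductive T45mAx : Form → Prop
  | tm {φ : Form} : TmAx φ → T45mAx φ
  | four (α : Form) : T45mAx (ax4 α)
  | five (α : Form) : T45mAx (ax5 α)

/-- The system Tmd: Tm with (K1) replaced by (Kdet). -/
inductive TmdAx : Form → Prop
  | pc {φ : Form} : Taut φ → TmdAx φ
  | k (α β : Form) : TmdAx (axK α β)
  | kdet (α β : Form) : TmdAx (axKdet α β)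
  | k2 (α β : Form) : TmdAx (axK2 α β)
  | m1 (α β : Form) : TmdAx (axM1 α β)
  | m2 (α β : Form) : TmdAx (axM2 α β)
  | m3 (α β : Form) : TmdAx (axM3 α β)
  | m4 (α β : Form) : TmdAx (axM4 α β)
  | t (α : Form) : TmdAx (axT α)
  | dn1 (α : Form) : TmdAx (axDN1 α)
  | dn2 (α : Form) : TmdAx (axDN2 α)

/-- The system Tm4d = Tmd + (4). -/
inductive Tm4dAx : Form → Prop
  | tmd {φ : Form} : TmdAx φ → Tm4dAx φ
  | four (α : Form) : Tm4dAx (ax4 α)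

/-- The system Tm + (Kdet). -/
inductive TmKdetAx : Form → Prop
  | tm {φ : Form} : TmAx φ → TmKdetAx φ
  | kdet (α β : Form) : TmKdetAx (axKdet α β)

/-- The system Km∘. -/
inductive KmCircAx : Form → Prop
  | pc {φ : Form} : Taut φ → KmCircAx φ
  | k'' (α β : Form) : KmCircAx ((circm α).imp (axK α β))
  | k1'' (α β : Form) : KmCircAx ((circm β).imp (axK1 α β))
  | k2'' (α β : Form) : KmCircAx ((circm α).imp (axK2 α β))
  | m1 (α β : Form) : KmCircAx (axM1 α β)
  | m2 (α β : Form) : KmCircAx (axM2 α β)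
  | m3'' (α β : Form) : KmCircAx ((circm α).imp (axM3 α β))
  | m4'' (α β : Form) : KmCircAx ((circm β).imp (axM4 α β))
  | i1' (α β : Form) : KmCircAx ((bulm α).imp (bulm (α.imp β)))
  | i2' (α β : Form) : KmCircAx ((bulm β).imp (bulm (α.imp β)))
  | dn1 (α : Form) : KmCircAx (axDN1 α)
  | dn2 (α : Form) : KmCircAx (axDN2 α)

/- ## The eight-valued non-deterministic semantics -/

/-- The modal "letters" T, C, F, I. -/
inductive Ltr : Type
  | T | C | F | I
  deriving DecidableEq

/-- An eight-valued truth-value: a letter together with a sign (`true` = +). -/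
structure V8 where
  ltr : Ltr
  sgn : Bool
  deriving DecidableEq

/-- Designated values: those with sign +. -/
def V8.desig (x : V8) : Prop := x.sgn = true

/-- Letter of the negation. -/
def lneg : Ltr → Ltr
  | .T => .F
  | .C => .C
  | .F => .T
  | .I => .I

/-- The (deterministic) multioperator for ¬. -/
def neg8 (x : V8) : Set V8 := {⟨lneg x.ltr, !x.sgn⟩}

/-- Set of possible letters of an implication, given the letters of the components. -/
def limp : Ltr → Ltr → Set Ltr
  | .I, _ => {Ltr.I}
  | .T, .I => {Ltr.I}
  | .C, .I => {Ltr.I}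
  | .F, .I => {Ltr.I}
  | .T, .T => {Ltr.T}
  | .T, .C => {Ltr.C}
  | .T, .F => {Ltr.F}
  | .C, .T => {Ltr.T}
  | .C, .C => {Ltr.T, Ltr.C}
  | .C, .F => {Ltr.C}
  | .F, .T => {Ltr.T}
  | .F, .C => {Ltr.T}
  | .F, .F => {Ltr.T}

/-- The multioperator for →: sign is material implication of the signs, letter as in `limp`. -/
def imp8 (x y : V8) : Set V8 :=
  { z | z.ltr ∈ limp x.ltr y.ltr ∧ z.sgn = (!x.sgn || y.sgn) }

/-- The multioperator for □ in (the Nmatrix for) Km. -/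
def box8Km (x : V8) : Set V8 :=
  if x.ltr = Ltr.T ∨ x.ltr = Ltr.I then { z | z.sgn = true } else { z | z.sgn = false }

/-- The multioperator for □ in the Nmatrix for K4m. -/
def box8K4m (x : V8) : Set V8 :=
  if x.ltr = Ltr.T ∨ x.ltr = Ltr.I then ({⟨Ltr.T, true⟩, ⟨Ltr.I, true⟩} : Set V8)
  else { z | z.sgn = false }

/-- The multioperator for □ in the Nmatrix for K45m. -/
def box8K45m (x : V8) : Set V8 :=
  if x.ltr = Ltr.T ∨ x.ltr = Ltr.I then ({⟨Ltr.T, true⟩, ⟨Ltr.I, true⟩} : Set V8)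
  else ({⟨Ltr.F, false⟩, ⟨Ltr.I, false⟩} : Set V8)

/-- A valuation over the eight-valued Nmatrix with the given □-multioperator. -/
def IsVal8 (boxOp : V8 → Set V8) (v : Form → V8) : Prop :=
  (∀ α, v (Form.neg α) ∈ neg8 (v α)) ∧
  (∀ α β, v (Form.imp α β) ∈ imp8 (v α) (v β)) ∧
  (∀ α, v (Form.box α) ∈ boxOp (v α))

/-- Semantic consequence over the eight-valued Nmatrix with the given □-multioperator. -/
def NmEntails (boxOp : V8 → Set V8) (Γ : Set Form) (φ : Form) : Prop :=
  ∀ v : Form → V8, IsVal8 boxOp v → (∀ γ ∈ Γ, (v γ).desig) → (v φ).desig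

/- ## Multialgebras -/

/-- A multialgebra over {¬,→,□}, presented on the carrier `V8` with a chosen domain. -/
structure MAlg where
  dom : Set V8
  negOp : V8 → Set V8
  impOp : V8 → V8 → Set V8
  boxOp : V8 → Set V8

/-- `A` is a submultialgebra of `B`. -/
def SubMAlg (A B : MAlg) : Prop :=
  A.dom ⊆ B.dom ∧
  (∀ x ∈ A.dom, A.negOp x ⊆ B.negOp x) ∧
  (∀ x ∈ A.dom, ∀ y ∈ A.dom, A.impOp x y ⊆ B.impOp x y) ∧
  (∀ x ∈ A.dom, A.boxOp x ⊆ B.boxOp x)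

/-- Domain of the Nmatrix for Dm: the six non-I values. -/
def domDm : Set V8 := { x | x.ltr ≠ Ltr.I }

/-- Domain of the Nmatrix for Tm: {T+, C+, C−, F−}. -/
def domTm : Set V8 :=
  ({⟨Ltr.T, true⟩, ⟨Ltr.C, true⟩, ⟨Ltr.C, false⟩, ⟨Ltr.F, false⟩} : Set V8)

/-- The multialgebra underlying the Nmatrix for Km. -/
def A_Km : MAlg := ⟨Set.univ, neg8, imp8, box8Km⟩

/-- The □-multioperator of Dm: T ↦ {T+,C+,F+}, C∪F ↦ {T−,C−,F−}. -/
def boxDm (x : V8) : Set V8 :=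
  if x.ltr = Ltr.T then { z | z.sgn = true } ∩ domDm else { z | z.sgn = false } ∩ domDm

/-- The multialgebra underlying the Nmatrix for Dm. -/
def A_Dm : MAlg :=
  ⟨domDm, fun x => neg8 x ∩ domDm, fun x y => imp8 x y ∩ domDm, boxDm⟩

/-- The □-multioperator of Tm: T+ ↦ {T+,C+}, and C+, C−, F− ↦ {C−,F−}. -/
def boxTm (x : V8) : Set V8 :=
  if x = ⟨Ltr.T, true⟩ then ({⟨Ltr.T, true⟩, ⟨Ltr.C, true⟩} : Set V8)
  else ({⟨Ltr.C, false⟩, ⟨Ltr.F, false⟩} : Set V8)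

/-- The multialgebra underlying the Nmatrix for Tm. -/
def A_Tm : MAlg :=
  ⟨domTm, fun x => neg8 x ∩ domTm, fun x y => imp8 x y ∩ domTm, boxTm⟩

/- ## The four-valued Nmatrix for Tmd -/

/-- The four values T+, C+, C−, F−. -/
inductive V4 : Type
  | Tp | Cp | Cm | Fm
  deriving DecidableEq

/-- Designated values of the Tmd Nmatrix: T+ and C+. -/
def V4.desig (x : V4) : Prop := x = V4.Tp ∨ x = V4.Cp

/-- Negation: deterministic. -/
def neg4 : V4 → V4
  | .Tp => .Fm
  | .Cp => .Cm
  | .Cm => .Cp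
  | .Fm => .Tp

/-- Position in the chain F− < C− < C+ < T+. -/
def rank4 : V4 → Nat
  | .Fm => 0
  | .Cm => 1
  | .Cp => 2
  | .Tp => 3

def ofRank4 : Nat → V4
  | 0 => .Fm
  | 1 => .Cm
  | 2 => .Cp
  | _ => .Tp

/-- The deterministic implication of Tmd: x→y is the maximum of ¬x and y in the chain. -/
def imp4 (x y : V4) : V4 := ofRank4 (max (rank4 (neg4 x)) (rank4 y))

/-- The □-multioperator of Tmd: T+ ↦ {T+,C+}; C+, C−, F− ↦ {C−,F−}. -/
def box4 (x : V4) : Set V4 :=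
  if x = V4.Tp then ({V4.Tp, V4.Cp} : Set V4) else ({V4.Cm, V4.Fm} : Set V4)

/-- A valuation over the Nmatrix for Tmd. -/
def IsVal4 (v : Form → V4) : Prop :=
  (∀ α, v (Form.neg α) = neg4 (v α)) ∧
  (∀ α β, v (Form.imp α β) = imp4 (v α) (v β)) ∧
  (∀ α, v (Form.box α) ∈ box4 (v α))

/-- Semantic consequence over the Nmatrix for Tmd. -/
def TmdEntails (Γ : Set Form) (φ : Form) : Prop :=
  ∀ v : Form → V4, IsVal4 v → (∀ γ ∈ Γ, (v γ).desig) → (v φ).desig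

/- ## Deterministic logical matrices -/

/-- A deterministic logical matrix over the signature {¬,→,□}. -/
structure DetMatrix where
  carrier : Type
  negOp : carrier → carrier
  impOp : carrier → carrier → carrier
  boxOp : carrier → carrier
  desig : Set carrier

/-- A valuation (homomorphism) over a deterministic matrix. -/
def DetMatrix.IsVal (Mat : DetMatrix) (h : Form → Mat.carrier) : Prop :=
  (∀ α, h (Form.neg α) = Mat.negOp (h α)) ∧
  (∀ α β, h (Form.imp α β) = Mat.impOp (h α) (h β)) ∧
  (∀ α, h (Form.box α) = Mat.boxOp (h α))

/-- Semantic consequence over a deterministic matrix. -/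
def DetMatrix.Entails (Mat : DetMatrix) (Γ : Set Form) (φ : Form) : Prop :=
  ∀ h : Form → Mat.carrier, Mat.IsVal h → (∀ γ ∈ Γ, h γ ∈ Mat.desig) → h φ ∈ Mat.desig

/-- Validity in a deterministic matrix. -/
def DetMatrix.Valid (Mat : DetMatrix) (φ : Form) : Prop :=
  ∀ h : Form → Mat.carrier, Mat.IsVal h → h φ ∈ Mat.desig

/- ## The Dugundji formulas δ(m) -/

/-- Left-associated disjunction of a nonempty list of formulas. -/
def bigOr : List Form → Form
  | [] => Form.var 0
  | a :: l => l.foldl Form.disj a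

/-- α(m): the left-associated disjunction of the variables p_1, …, p_m. -/
def alphaF (m : Nat) : Form := bigOr ((List.range m).map Form.var)

/-- β_i(m): the left-associated disjunction of p_1, …, p_m with p_i omitted. -/
def betaF (m i : Nat) : Form :=
  bigOr (((List.range m).filter (fun j => j != i)).map Form.var)

/-- δ(m): the left-associated disjunction of the formulas □α(m)→□β_i(m), 1 ≤ i ≤ m. -/
def deltaF (m : Nat) : Form :=
  bigOr ((List.range m).map (fun i => (Form.box (alphaF m)).imp (Form.box (betaF m i))))


/- ## Auxiliary development -/

-- tautologies
lemma taut_k (a b : Form) : Taut (b.imp (a.imp b)) := by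
  intro v hn hi; simp only [hi]; cases v a <;> cases v b <;> rfl
lemma taut_s (a b c : Form) :
    Taut ((a.imp (b.imp c)).imp ((a.imp b).imp (a.imp c))) := by
  intro v hn hi; simp only [hi]; cases v a <;> cases v b <;> cases v c <;> rfl
lemma taut_id (a : Form) : Taut (a.imp a) := by
  intro v hn hi; simp only [hi]; cases v a <;> rfl
lemma taut_efq (a b : Form) : Taut ((neg a).imp (a.imp b)) := by
  intro v hn hi; simp only [hi, hn]; cases v a <;> cases v b <;> rfl
lemma taut_absurd (a b : Form) : Taut (a.imp ((neg a).imp b)) := by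
  intro v hn hi; simp only [hi, hn]; cases v a <;> cases v b <;> rfl
lemma taut_cases (a b : Form) : Taut ((a.imp b).imp (((neg a).imp b).imp b)) := by
  intro v hn hi; simp only [hi, hn]; cases v a <;> cases v b <;> rfl

section DerivLemmas
variable {Ax : Form → Prop}

lemma deriv_mono {Γ Γ' : Set Form} (h : Γ ⊆ Γ') {φ : Form}
    (d : Deriv Ax Γ φ) : Deriv Ax Γ' φ := by
  induction d with
  | prem h' => exact .prem (h h')
  | ax h' => exact .ax h'
  | mp _ _ ih1 ih2 => exact .mp ih1 ih2

lemma deriv_cut {Γ : Set Form} {φ ψ : Form} (h1 : Deriv Ax Γ φ)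
    (h2 : Deriv Ax (insert φ Γ) ψ) : Deriv Ax Γ ψ := by
  induction h2 with
  | prem h' =>
    rcases h' with h' | h'
    · subst h'; exact h1
    · exact .prem h'
  | ax h' => exact .ax h'
  | mp _ _ ih1 ih2 => exact .mp ih1 ih2

variable (hpc : ∀ φ, Taut φ → Ax φ)
include hpc

lemma deduction {Γ : Set Form} {φ ψ : Form}
    (d : Deriv Ax (insert φ Γ) ψ) : Deriv Ax Γ (φ.imp ψ) := by
  induction d with
  | @prem χ h' =>
    rcases h' with h' | h'
    · subst h'; exact .ax (hpc _ (taut_id _))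
    · exact .mp (.ax (hpc _ (taut_k φ χ))) (.prem h')
  | @ax χ h' => exact .mp (.ax (hpc _ (taut_k φ χ))) (.ax h')
  | @mp χ ρ _ _ ih1 ih2 =>
    exact .mp (.mp (.ax (hpc _ (taut_s φ χ ρ))) ih1) ih2

end DerivLemmas

-- countability of Form
def Form.enc : Form → ℕ
  | .var n => Nat.pair 0 n
  | .neg φ => Nat.pair 1 φ.enc
  | .imp φ ψ => Nat.pair 2 (Nat.pair φ.enc ψ.enc)
  | .box φ => Nat.pair 3 φ.enc

lemma Form.enc_inj : Function.Injective Form.enc := by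
  intro x
  induction x with
  | var n =>
    intro y hy
    cases y <;> simp only [Form.enc, Nat.pair_eq_pair] at hy <;>
      first
      | (exact absurd hy.1 (by omega))
      | (rw [hy.2])
  | neg φ ih =>
    intro y hy
    cases y <;> simp only [Form.enc, Nat.pair_eq_pair] at hy <;>
      first
      | (exact absurd hy.1 (by omega))
      | (rw [ih hy.2])
  | imp φ ψ ih1 ih2 =>
    intro y hy
    cases y <;> simp only [Form.enc, Nat.pair_eq_pair] at hy <;>
      first
      | (exact absurd hy.1 (by omega))
      | (rw [ih1 hy.2.1, ih2 hy.2.2])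
  | box φ ih =>
    intro y hy
    cases y <;> simp only [Form.enc, Nat.pair_eq_pair] at hy <;>
      first
      | (exact absurd hy.1 (by omega))
      | (rw [ih hy.2])

instance : Countable Form := ⟨Form.enc, Form.enc_inj⟩
instance : Nonempty Form := ⟨Form.var 0⟩

-- Lindenbaum
structure MaxSet (Ax : Form → Prop) (Δ : Set Form) (α : Form) : Prop where
  nd : ¬ Deriv Ax Δ α
  max : ∀ φ ∉ Δ, Deriv Ax (insert φ Δ) α

section Lindenbaum
attribute [local instance] Classical.propDecidable
variable {Ax : Form → Prop} {Γ : Set Form} {α : Form}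

noncomputable def lchain (Ax : Form → Prop) (Γ : Set Form) (α : Form) (f : ℕ → Form) : ℕ → Set Form
  | 0 => Γ
  | n + 1 =>
      if Deriv Ax (insert (f n) (lchain Ax Γ α f n)) α then lchain Ax Γ α f n
      else insert (f n) (lchain Ax Γ α f n)

lemma lchain_mono (f : ℕ → Form) {m n : ℕ} (h : m ≤ n) :
    lchain Ax Γ α f m ⊆ lchain Ax Γ α f n := by
  induction n with
  | zero => simp_all
  | succ n ih =>
    rcases Nat.lt_or_ge m (n+1) with h' | h'
    · refine (ih (Nat.lt_succ_iff.mp h')).trans ?_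
      simp only [lchain]
      split
      · exact subset_rfl
      · exact Set.subset_insert _ _
    · have : m = n + 1 := le_antisymm h h'
      subst this; exact subset_rfl

lemma lchain_nd (f : ℕ → Form) (h0 : ¬ Deriv Ax Γ α) (n : ℕ) :
    ¬ Deriv Ax (lchain Ax Γ α f n) α := by
  induction n with
  | zero => exact h0
  | succ n ih =>
    simp only [lchain]
    split
    · exact ih
    · assumption

lemma deriv_iUnion_chain (f : ℕ → Form) {φ : Form}
    (d : Deriv Ax (⋃ n, lchain Ax Γ α f n) φ) :
    ∃ n, Deriv Ax (lchain Ax Γ α f n) φ := by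
  induction d with
  | prem h' =>
    rcases Set.mem_iUnion.mp h' with ⟨n, hn⟩
    exact ⟨n, .prem hn⟩
  | ax h' => exact ⟨0, .ax h'⟩
  | mp _ _ ih1 ih2 =>
    obtain ⟨n1, h1⟩ := ih1
    obtain ⟨n2, h2⟩ := ih2
    refine ⟨max n1 n2, .mp (deriv_mono (lchain_mono f (le_max_left n1 n2)) h1)
      (deriv_mono (lchain_mono f (le_max_right n1 n2)) h2)⟩

lemma lindenbaum (h0 : ¬ Deriv Ax Γ α) :
    ∃ Δ : Set Form, Γ ⊆ Δ ∧ MaxSet Ax Δ α := by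
  obtain ⟨f, hf⟩ := exists_surjective_nat Form
  refine ⟨⋃ n, lchain Ax Γ α f n, Set.subset_iUnion (lchain Ax Γ α f) 0, ?_, ?_⟩
  · intro d
    obtain ⟨n, hn⟩ := deriv_iUnion_chain f d
    exact lchain_nd f h0 n hn
  · intro φ hφ
    obtain ⟨n, rfl⟩ := hf φ
    have hnot : f n ∉ lchain Ax Γ α f (n+1) := fun h =>
      hφ (Set.mem_iUnion.mpr ⟨n+1, h⟩)
    simp only [lchain] at hnot
    split at hnot
    · rename_i h
      exact deriv_mono (Set.insert_subset_insert (Set.subset_iUnion _ n)) h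
    · exact absurd (Set.mem_insert _ _) hnot

end Lindenbaum

-- properties of maximal sets
section MaxSetProps
variable {Ax : Form → Prop} {Δ : Set Form} {α : Form}
variable (hpc : ∀ φ, Taut φ → Ax φ) (hM : MaxSet Ax Δ α)
include hpc hM

lemma MaxSet.mem_of_deriv {φ : Form} (d : Deriv Ax Δ φ) : φ ∈ Δ := by
  by_contra h
  exact hM.nd (deriv_cut d (hM.max φ h))

lemma MaxSet.mem_neg_iff (φ : Form) : φ.neg ∈ Δ ↔ φ ∉ Δ := by
  constructor
  · intro h1 h2
    exact hM.nd (.mp (.mp (.ax (hpc _ (taut_absurd φ α))) (.prem h2)) (.prem h1))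
  · intro h
    by_contra h2
    have d1 : Deriv Ax Δ (φ.imp α) := deduction hpc (hM.max φ h)
    have d2 : Deriv Ax Δ (φ.neg.imp α) := deduction hpc (hM.max φ.neg h2)
    exact hM.nd (.mp (.mp (.ax (hpc _ (taut_cases φ α))) d1) d2)

lemma MaxSet.mem_imp_iff (φ ψ : Form) : φ.imp ψ ∈ Δ ↔ (φ ∈ Δ → ψ ∈ Δ) := by
  constructor
  · intro h hφ
    exact hM.mem_of_deriv hpc (.mp (.prem h) (.prem hφ))
  · intro h
    by_cases hφ : φ ∈ Δ
    · exact hM.mem_of_deriv hpc (.mp (.ax (hpc _ (taut_k φ ψ))) (.prem (h hφ)))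
    · have : φ.neg ∈ Δ := (hM.mem_neg_iff hpc φ).mpr hφ
      exact hM.mem_of_deriv hpc (.mp (.ax (hpc _ (taut_efq φ ψ))) (.prem this))

end MaxSetProps

-- letter/bool bridges
instance : Fintype Ltr :=
  ⟨⟨{Ltr.T, Ltr.C, Ltr.F, Ltr.I}, by decide⟩, by intro x; cases x <;> decide⟩

def limpB : Ltr → Ltr → Ltr → Bool
  | .I, _, z => z = Ltr.I
  | .T, .I, z => z = Ltr.I
  | .C, .I, z => z = Ltr.I
  | .F, .I, z => z = Ltr.I
  | .T, .T, z => z = Ltr.T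
  | .T, .C, z => z = Ltr.C
  | .T, .F, z => z = Ltr.F
  | .C, .T, z => z = Ltr.T
  | .C, .C, z => z = Ltr.T ∨ z = Ltr.C
  | .C, .F, z => z = Ltr.C
  | .F, _, z => z = Ltr.T

lemma mem_limp_iff (x y z : Ltr) : z ∈ limp x y ↔ limpB x y z = true := by
  cases x <;> cases y <;> cases z <;>
    simp [limp, limpB, Set.mem_insert_iff, Set.mem_singleton_iff]

def boxS : Ltr → Bool
  | .T => true
  | .I => true
  | _ => false

section ValLemmas
variable {v : Form → V8} (hv : IsVal8 box8K4m v)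
include hv

lemma val_neg (γ : Form) : v (Form.neg γ) = ⟨lneg (v γ).ltr, !(v γ).sgn⟩ := hv.1 γ

lemma sgn_neg (γ : Form) : (v (Form.neg γ)).sgn = !(v γ).sgn := by rw [val_neg hv]

lemma ltr_neg (γ : Form) : (v (Form.neg γ)).ltr = lneg (v γ).ltr := by rw [val_neg hv]

lemma sgn_imp (γ δ : Form) : (v (Form.imp γ δ)).sgn = (!(v γ).sgn || (v δ).sgn) :=
  (hv.2.1 γ δ).2

lemma ltr_imp (γ δ : Form) : limpB (v γ).ltr (v δ).ltr (v (Form.imp γ δ)).ltr = true :=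
  (mem_limp_iff _ _ _).mp (hv.2.1 γ δ).1

lemma sgn_box (γ : Form) : (v (Form.box γ)).sgn = boxS (v γ).ltr := by
  have h := hv.2.2 γ
  unfold box8K4m at h
  split at h
  · rcases h with h | h <;> rw [h] <;> rename_i hc <;>
      rcases hc with hc | hc <;> rw [hc] <;> rfl
  · rename_i hc
    have : boxS (v γ).ltr = false := by
      cases hl : (v γ).ltr <;> simp_all [boxS]
    rw [this]; exact h

lemma boxS_box (γ : Form) (h : boxS (v γ).ltr = true) :
    boxS (v (Form.box γ)).ltr = true := by
  have h2 := hv.2.2 γ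
  unfold box8K4m at h2
  have : (v γ).ltr = Ltr.T ∨ (v γ).ltr = Ltr.I := by
    cases hl : (v γ).ltr <;> simp_all [boxS]
  rw [if_pos this] at h2
  rcases h2 with h2 | h2 <;> rw [h2] <;> rfl

end ValLemmas

-- abstract boolean facts about the axioms, by finite check
lemma sound_axioms (x y z : Ltr) (h : limpB x y z = true) :
    ((!(!boxS (lneg x)) || (!boxS z || (!boxS x || boxS y))) = true) ∧       -- K'
    ((!(!boxS (lneg y)) || (!boxS z || (!(!boxS (lneg x)) || !boxS (lneg y)))) = true) ∧ -- K1'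
    ((!(!boxS (lneg z)) || (!(!boxS (lneg z)) || (!boxS x || !boxS (lneg y)))) = true) ∧ -- K2'
    ((!(!(!boxS (lneg x))) || boxS z) = true) ∧                               -- M1
    ((!boxS y || boxS z) = true) ∧                                            -- M2
    ((!(!(!(!boxS (lneg x))) || !boxS (lneg (lneg x))) ||
       (!(!boxS (lneg y)) || !boxS (lneg z))) = true) ∧                       -- M3'
    ((!(!boxS (lneg (lneg y))) || (!(!boxS (lneg (lneg x))) || !boxS (lneg z))) = true) ∧ -- M4'
    ((!(boxS x && boxS (lneg x)) || (boxS z && boxS (lneg z))) = true) ∧      -- I1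
    ((!(boxS y && boxS (lneg y)) || (boxS z && boxS (lneg z))) = true) := by  -- I2
  revert h; revert x y z; decide

lemma desig_iff {x : V8} : x.desig ↔ x.sgn = true := Iff.rfl

theorem K4m_sound {Γ : Set Form} {α : Form} (d : Deriv K4mAx Γ α) :
    NmEntails box8K4m Γ α := by
  intro v hv hΓ
  induction d with
  | prem h => exact hΓ _ h
  | mp _ _ ih1 ih2 =>
    rw [desig_iff] at *
    rw [sgn_imp hv] at ih1
    rw [ih2] at ih1
    simpa using ih1
  | ax h =>
    rw [desig_iff]
    cases h with
    | four a =>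
      simp only [ax4, sgn_imp hv, sgn_box hv]
      by_cases h : boxS (v a).ltr = true
      · rw [h, boxS_box hv a h]; rfl
      · rw [Bool.not_eq_true] at h; rw [h]; rfl
    | km hk =>
      cases hk with
      | pc ht => exact ht (fun φ => (v φ).sgn) (sgn_neg hv) (sgn_imp hv)
      | dn1 a =>
        simp only [axDN1, sgn_imp hv, sgn_box hv, ltr_neg hv]
        generalize (v a).ltr = x
        revert x; decide
      | dn2 a =>
        simp only [axDN2, sgn_imp hv, sgn_box hv, ltr_neg hv]
        generalize (v a).ltr = x
        revert x; decide
      | k' a b =>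
        simp only [axK', axK, Form.dia, sgn_imp hv, sgn_neg hv, sgn_box hv, ltr_neg hv]
        have hl := ltr_imp hv a b
        revert hl
        generalize (v (a.imp b)).ltr = z
        generalize (v b).ltr = y
        generalize (v a).ltr = x
        revert x y z; decide
      | k1' a b =>
        simp only [axK1', axK1, Form.dia, sgn_imp hv, sgn_neg hv, sgn_box hv, ltr_neg hv]
        have hl := ltr_imp hv a b
        revert hl
        generalize (v (a.imp b)).ltr = z
        generalize (v b).ltr = y
        generalize (v a).ltr = x
        revert x y z; decide
      | k2' a b =>
        simp only [axK2', axK2, Form.dia, sgn_imp hv, sgn_neg hv, sgn_box hv, ltr_neg hv]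
        have hl := ltr_imp hv a b
        revert hl
        generalize (v (a.imp b)).ltr = z
        generalize (v b).ltr = y
        generalize (v a).ltr = x
        revert x y z; decide
      | m1 a b =>
        simp only [axM1, Form.dia, sgn_imp hv, sgn_neg hv, sgn_box hv, ltr_neg hv]
        have hl := ltr_imp hv a b
        revert hl
        generalize (v (a.imp b)).ltr = z
        generalize (v b).ltr = y
        generalize (v a).ltr = x
        revert x y z; decide
      | m2 a b =>
        simp only [axM2, sgn_imp hv, sgn_box hv]
        have hl := ltr_imp hv a b
        revert hl
        generalize (v (a.imp b)).ltr = z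
        generalize (v b).ltr = y
        generalize (v a).ltr = x
        revert x y z; decide
      | m3' a b =>
        simp only [axM3', axM3, Form.dia, Form.disj, sgn_imp hv, sgn_neg hv, sgn_box hv,
          ltr_neg hv]
        have hl := ltr_imp hv a b
        revert hl
        generalize (v (a.imp b)).ltr = z
        generalize (v b).ltr = y
        generalize (v a).ltr = x
        revert x y z; decide
      | m4' a b =>
        simp only [axM4', axM4, Form.dia, sgn_imp hv, sgn_neg hv, sgn_box hv, ltr_neg hv]
        have hl := ltr_imp hv a b
        revert hl
        generalize (v (a.imp b)).ltr = z
        generalize (v b).ltr = y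
        generalize (v a).ltr = x
        revert x y z; decide
      | i1 a b =>
        simp only [axI1, Form.conj, sgn_imp hv, sgn_neg hv, sgn_box hv, ltr_neg hv]
        have hl := ltr_imp hv a b
        revert hl
        generalize (v (a.imp b)).ltr = z
        generalize (v b).ltr = y
        generalize (v a).ltr = x
        revert x y z; decide
      | i2 a b =>
        simp only [axI2, Form.conj, sgn_imp hv, sgn_neg hv, sgn_box hv, ltr_neg hv]
        have hl := ltr_imp hv a b
        revert hl
        generalize (v (a.imp b)).ltr = z
        generalize (v b).ltr = y
        generalize (v a).ltr = x
        revert x y z; decide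

def letterOf : Bool → Bool → Ltr
  | true, true => .I
  | true, false => .T
  | false, true => .F
  | false, false => .C

lemma letterOf_swap (a b : Bool) : letterOf b a = lneg (letterOf a b) := by
  cases a <;> cases b <;> rfl

lemma letterOf_TI (a b : Bool) :
    (letterOf a b = Ltr.T ∨ letterOf a b = Ltr.I) ↔ a = true := by
  cases a <;> cases b <;> simp [letterOf]

set_option synthInstance.maxSize 2000 in
set_option synthInstance.maxHeartbeats 2000000 in
set_option maxHeartbeats 1000000 in
lemma complete_key (a a' b b' c c' : Bool)
    (hK' : a' = false → c = true → a = true → b = true)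
    (hK1' : b = false → c = true → a' = false → b' = false)
    (hK2' : a' = false → c' = false → a = true → b' = false)
    (hM1 : a' = true → c = true)
    (hM2 : b = true → c = true)
    (hM3' : (a' = true → a = false) → b' = false → c' = false)
    (hM4' : b = false → a = false → c' = false)
    (hI1 : a = true ∧ a' = true → c = true ∧ c' = true)
    (hI2 : b = true ∧ b' = true → c = true ∧ c' = true) :
    limpB (letterOf a a') (letterOf b b') (letterOf c c') = true := by
  revert hK' hK1' hK2' hM1 hM2 hM3' hM4' hI1 hI2
  revert a a' b b' c c'
  decide

section Complete
attribute [local instance] Classical.propDecidable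

noncomputable def Dmem (Δ : Set Form) (γ : Form) : Bool := decide (γ ∈ Δ)

noncomputable def cval (Δ : Set Form) (γ : Form) : V8 :=
  ⟨letterOf (Dmem Δ (Form.box γ)) (Dmem Δ (Form.box (Form.neg γ))), Dmem Δ γ⟩

lemma Dmem_true {Δ : Set Form} {γ : Form} : Dmem Δ γ = true ↔ γ ∈ Δ := by
  simp [Dmem]

lemma Dmem_false {Δ : Set Form} {γ : Form} : Dmem Δ γ = false ↔ γ ∉ Δ := by
  simp [Dmem]

set_option maxHeartbeats 2000000 in
theorem K4m_complete {Γ : Set Form} {α : Form} (h0 : ¬ Deriv K4mAx Γ α) :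
    ¬ NmEntails box8K4m Γ α := by
  have hpc : ∀ φ, Taut φ → K4mAx φ := fun φ h => .km (.pc h)
  obtain ⟨Δ, hΓΔ, hM⟩ := lindenbaum h0
  have haxmem : ∀ θ, K4mAx θ → θ ∈ Δ := fun θ h => hM.mem_of_deriv hpc (.ax h)
  have himp : ∀ x y : Form, (x.imp y ∈ Δ) ↔ (x ∈ Δ → y ∈ Δ) := hM.mem_imp_iff hpc
  have hneg : ∀ x : Form, (x.neg ∈ Δ) ↔ x ∉ Δ := hM.mem_neg_iff hpc
  have hdn : ∀ x : Form, (Form.box (Form.neg (Form.neg x)) ∈ Δ) ↔ Form.box x ∈ Δ := by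
    intro x
    constructor
    · intro h
      exact hM.mem_of_deriv hpc (.mp (.ax (.km (.dn2 x))) (.prem h))
    · intro h
      exact hM.mem_of_deriv hpc (.mp (.ax (.km (.dn1 x))) (.prem h))
  have hDneg : ∀ x : Form, Dmem Δ x.neg = !(Dmem Δ x) := by
    intro x
    by_cases hx : x ∈ Δ <;> simp [Dmem, hneg, hx]
  have hDdn : ∀ x : Form, Dmem Δ (Form.box (Form.neg (Form.neg x))) = Dmem Δ (Form.box x) := by
    intro x
    by_cases hx : Form.box x ∈ Δ <;> simp [Dmem, hdn, hx]
  have hval : IsVal8 box8K4m (cval Δ) := by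
    refine ⟨?_, ?_, ?_⟩
    · intro γ
      show (⟨letterOf (Dmem Δ (Form.box γ.neg)) (Dmem Δ (Form.box γ.neg.neg)),
        Dmem Δ γ.neg⟩ : V8) ∈ neg8 (cval Δ γ)
      simp only [neg8, Set.mem_singleton_iff, cval, V8.mk.injEq]
      exact ⟨by rw [hDdn γ, letterOf_swap], hDneg γ⟩
    · intro γ δ
      have hK' := haxmem _ (.km (.k' γ δ))
      have hK1' := haxmem _ (.km (.k1' γ δ))
      have hK2' := haxmem _ (.km (.k2' γ δ))
      have hM1 := haxmem _ (.km (.m1 γ δ))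
      have hM2' := haxmem _ (.km (.m2 γ δ))
      have hM3' := haxmem _ (.km (.m3' γ δ))
      have hM4' := haxmem _ (.km (.m4' γ δ))
      have hI1 := haxmem _ (.km (.i1 γ δ))
      have hI2 := haxmem _ (.km (.i2 γ δ))
      simp only [axK', axK, axK1', axK1, axK2', axK2, axM1, axM2, axM3', axM3,
        axM4', axM4, axI1, axI2, Form.dia, Form.disj, Form.conj,
        himp, hneg, hdn, not_not, Classical.not_imp] at hK' hK1' hK2' hM1 hM2' hM3' hM4' hI1 hI2
      refine ⟨?_, ?_⟩
      · show letterOf (Dmem Δ (Form.box (γ.imp δ))) (Dmem Δ (Form.box (γ.imp δ).neg)) ∈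
          limp (letterOf (Dmem Δ (Form.box γ)) (Dmem Δ (Form.box γ.neg)))
               (letterOf (Dmem Δ (Form.box δ)) (Dmem Δ (Form.box δ.neg)))
        rw [mem_limp_iff]
        apply complete_key
        · simp only [Dmem_true, Dmem_false]; exact hK'
        · simp only [Dmem_true, Dmem_false]; exact hK1'
        · simp only [Dmem_true, Dmem_false]; exact hK2'
        · simp only [Dmem_true, Dmem_false]; exact hM1
        · simp only [Dmem_true, Dmem_false]; exact hM2'
        · simp only [Dmem_true, Dmem_false]; exact hM3'
        · simp only [Dmem_true, Dmem_false]; exact hM4'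
        · simp only [Dmem_true, Dmem_false]; exact hI1
        · simp only [Dmem_true, Dmem_false]; exact hI2
      · show Dmem Δ (γ.imp δ) = (!(Dmem Δ γ) || Dmem Δ δ)
        by_cases hx : γ ∈ Δ <;> by_cases hy : δ ∈ Δ <;> simp [Dmem, himp, hx, hy]
    · intro γ
      show cval Δ (Form.box γ) ∈ box8K4m (cval Δ γ)
      unfold box8K4m
      by_cases hbox : Dmem Δ (Form.box γ) = true
      · have hcond : (cval Δ γ).ltr = Ltr.T ∨ (cval Δ γ).ltr = Ltr.I :=
          (letterOf_TI _ _).mpr hbox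
        rw [if_pos hcond]
        have h4 : Dmem Δ (Form.box (Form.box γ)) = true := by
          rw [Dmem_true]
          exact hM.mem_of_deriv hpc (.mp (.ax (.four γ)) (.prem (Dmem_true.mp hbox)))
        show (⟨letterOf (Dmem Δ (Form.box (Form.box γ))) (Dmem Δ (Form.box (Form.box γ).neg)),
          Dmem Δ (Form.box γ)⟩ : V8) ∈ _
        rw [h4, hbox]
        cases hx : Dmem Δ (Form.box (Form.box γ).neg)
        · left; rfl
        · right; rfl
      · rw [Bool.not_eq_true] at hbox
        have hcond : ¬((cval Δ γ).ltr = Ltr.T ∨ (cval Δ γ).ltr = Ltr.I) := by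
          simp only [cval, letterOf_TI]
          simp [hbox]
        rw [if_neg hcond]
        exact hbox
  intro hent
  have hdes := hent (cval Δ) hval (fun γ hγ => by
    show Dmem Δ γ = true
    exact Dmem_true.mpr (hΓΔ hγ))
  have : α ∈ Δ := Dmem_true.mp hdes
  exact hM.nd (.prem this)

end Complete

/-- Soundness and completeness of K4m with respect to its eight-valued Nmatrix. -/
theorem K4m_sound_complete (Γ : Set Form) (α : Form) :
    Deriv K4mAx Γ α ↔ NmEntails box8K4m Γ α := by
  constructor
  · exact K4m_sound
  · intro h
    by_contra hd
    exact K4m_complete hd h
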